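/- Let S(z) = Σ_{k≥0} s_k z^k be the formal power series with s_0 = 1 satisfying the Mahler equation S(z^{16}) = −z S(z) + (1 + z + z^2) S(z^4). Then for all k ≥ 0: s_{4k} = s_{4k+1} = s_k, s_{4k+2} = 0, and s_{4k+3} = 0 if k ≡ 3 (mod 4) while s_{4k+3} = s_{k+1} otherwise. -/

import Mathlib

open PowerSeries

/-- `f(z^d)` as a formal power series. -/
noncomputable def substPow {R : Type*} [Semiring R] (d : ℕ) (f : PowerSeries R) :
    PowerSeries R :=
  PowerSeries.mk fun n => if d ∣ n then PowerSeries.coeff (n / d) f else 0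

/-!
Comparing the coefficients of `z^(n+2)` on both sides of the Mahler equation expresses
`s_(n+1)` through at most three coefficients of `S(z^4)` and one of `S(z^16)`. Only those whose
index is divisible by 4 (resp. 16) survive, so each residue class of `n` mod 4 yields one of the
four claimed identities; for `s_(4k+3)` the surviving term of `S(z^16)` is `s_((k+1)/4)`, present
exactly when `k ≡ 3 (mod 4)`, where it cancels `s_(k+1) = s_(4 · (k+1)/4)`.
-/

section SubstPow

variable {R : Type*} [Semiring R]

theorem coeff_substPow (d n : ℕ) (f : R⟦X⟧) :
    coeff n (substPow d f) = if d ∣ n then coeff (n / d) f else 0 := by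
  simp [substPow]

theorem coeff_substPow_of_not_dvd {d n : ℕ} (h : ¬d ∣ n) (f : R⟦X⟧) :
    coeff n (substPow d f) = 0 := by
  rw [coeff_substPow, if_neg h]

theorem coeff_mul_substPow_mul {a : ℕ} (ha : 0 < a) (b n : ℕ) (f : R⟦X⟧) :
    coeff (a * n) (substPow (a * b) f) = coeff n (substPow b f) := by
  simp only [coeff_substPow, Nat.mul_dvd_mul_iff_left ha, Nat.mul_div_mul_left _ _ ha]

theorem coeff_mul_substPow {d : ℕ} (hd : 0 < d) (m : ℕ) (f : R⟦X⟧) :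
    coeff (d * m) (substPow d f) = coeff m f := by
  rw [coeff_substPow, if_pos (dvd_mul_right d m), Nat.mul_div_cancel_left m hd]

end SubstPow

section MahlerEquation

variable {R : Type*} [CommRing R] {S : R⟦X⟧}

theorem coeff_succ_of_mahler
    (hfe : substPow 16 S = -X * S + (1 + X + X ^ 2) * substPow 4 S) (n : ℕ) :
    coeff (n + 1) S = coeff (n + 2) (substPow 4 S) + coeff (n + 1) (substPow 4 S) +
      coeff n (substPow 4 S) - coeff (n + 2) (substPow 16 S) := by
  have h := congrArg (coeff (n + 2)) hfe
  rw [show ∀ T : R⟦X⟧, (1 + X + X ^ 2) * T = T + X * T + X ^ 2 * T from fun T => by ring]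
    at h
  simp only [map_add, neg_mul, map_neg, coeff_succ_X_mul, coeff_X_pow_mul] at h
  linear_combination h

theorem coeff_four_mul_add_one_of_mahler
    (hfe : substPow 16 S = -X * S + (1 + X + X ^ 2) * substPow 4 S) (k : ℕ) :
    coeff (4 * k + 1) S = coeff k S := by
  rw [coeff_succ_of_mahler hfe, coeff_mul_substPow (by norm_num),
    coeff_substPow_of_not_dvd (by omega), coeff_substPow_of_not_dvd (by omega),
    coeff_substPow_of_not_dvd (by omega)]
  ring

theorem coeff_four_mul_add_two_of_mahler
    (hfe : substPow 16 S = -X * S + (1 + X + X ^ 2) * substPow 4 S) (k : ℕ) :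
    coeff (4 * k + 2) S = 0 := by
  rw [coeff_succ_of_mahler hfe, coeff_substPow_of_not_dvd (by omega),
    coeff_substPow_of_not_dvd (by omega), coeff_substPow_of_not_dvd (by omega),
    coeff_substPow_of_not_dvd (by omega)]
  ring

theorem coeff_four_mul_add_three_of_mahler
    (hfe : substPow 16 S = -X * S + (1 + X + X ^ 2) * substPow 4 S) (k : ℕ) :
    coeff (4 * k + 3) S = coeff (k + 1) S - coeff (k + 1) (substPow 4 S) := by
  rw [coeff_succ_of_mahler hfe, show 4 * k + 2 + 2 = 4 * (k + 1) by ring,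
    coeff_mul_substPow (by norm_num),
    show (16 : ℕ) = 4 * 4 from rfl, coeff_mul_substPow_mul (by norm_num),
    coeff_substPow_of_not_dvd (by omega), coeff_substPow_of_not_dvd (by omega)]
  ring

theorem coeff_four_mul_of_mahler
    (hfe : substPow 16 S = -X * S + (1 + X + X ^ 2) * substPow 4 S) (k : ℕ) :
    coeff (4 * k) S = coeff k S := by
  obtain _ | k := k
  · rfl
  rw [show 4 * (k + 1) = 4 * k + 3 + 1 by ring, coeff_succ_of_mahler hfe,
    show 4 * k + 3 + 1 = 4 * (k + 1) by ring, coeff_mul_substPow (by norm_num),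
    coeff_substPow_of_not_dvd (by omega),
    coeff_substPow_of_not_dvd (by omega), coeff_substPow_of_not_dvd (by omega)]
  ring

end MahlerEquation

theorem dilcherStolarsky_coefficients_general
    (S : PowerSeries ℤ)
    (hfe : substPow 16 S =
      -PowerSeries.X * S + (1 + PowerSeries.X + PowerSeries.X ^ 2) * substPow 4 S) :
    ∀ k : ℕ,
      PowerSeries.coeff (4 * k) S = PowerSeries.coeff k S ∧
      PowerSeries.coeff (4 * k + 1) S = PowerSeries.coeff k S ∧
      PowerSeries.coeff (4 * k + 2) S = 0 ∧
      (if k % 4 = 3 then PowerSeries.coeff (4 * k + 3) S = 0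
        else PowerSeries.coeff (4 * k + 3) S = PowerSeries.coeff (k + 1) S) := by
  intro k
  refine ⟨coeff_four_mul_of_mahler hfe k, coeff_four_mul_add_one_of_mahler hfe k,
    coeff_four_mul_add_two_of_mahler hfe k, ?_⟩
  rw [coeff_four_mul_add_three_of_mahler hfe]
  split_ifs with hk
  · obtain ⟨j, hj⟩ : 4 ∣ k + 1 := by omega
    rw [hj, coeff_mul_substPow (by norm_num), coeff_four_mul_of_mahler hfe, sub_self]
  · rw [coeff_substPow_of_not_dvd (by omega), sub_zero]

/-- The Dilcher–Stolarsky series `S(z) = Σ s_k z^k`, with `s_0 = 1` and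
`S(z^{16}) = −z S(z) + (1+z+z^2) S(z^4)`, has coefficients satisfying
`s_{4k} = s_{4k+1} = s_k`, `s_{4k+2} = 0`, and `s_{4k+3} = 0` if `k ≡ 3 (mod 4)`,
`s_{4k+3} = s_{k+1}` otherwise. -/
theorem dilcherStolarsky_coefficients
    (S : PowerSeries ℤ) (h0 : PowerSeries.coeff 0 S = 1)
    (hfe : substPow 16 S =
      -PowerSeries.X * S + (1 + PowerSeries.X + PowerSeries.X ^ 2) * substPow 4 S) :
    ∀ k : ℕ,
      PowerSeries.coeff (4 * k) S = PowerSeries.coeff k S ∧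
      PowerSeries.coeff (4 * k + 1) S = PowerSeries.coeff k S ∧
      PowerSeries.coeff (4 * k + 2) S = 0 ∧
      (if k % 4 = 3 then PowerSeries.coeff (4 * k + 3) S = 0
        else PowerSeries.coeff (4 * k + 3) S = PowerSeries.coeff (k + 1) S) :=
  dilcherStolarsky_coefficients_general S hfe
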